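/- Let d2(n) be the number of 2-distant noncrossing partitions of [n]. Then d2(0)=d2(1)=1, and for n ≥ 2, d2(n) = 2·d2(n-1) + Σ_{i=2}^{n-1} d2(n-i)·(d2(i) - d2(i-1)). -/

import Mathlib

/-- `(i,j)` is a standard edge of the set partition `p` of `[n]`:
`i < j` lie in the same block with no block element strictly between them. -/
def stdEdge {n : ℕ} (p : Finpartition (Finset.Icc 1 n : Finset ℕ)) (i j : ℕ) : Prop :=
  i < j ∧ ∃ B ∈ p.parts, i ∈ B ∧ j ∈ B ∧ ∀ t ∈ B, ¬ (i < t ∧ t < j)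

/-- `(i,j)` is a front edge: `i < j` lie in the same block and `i` is the
minimum (head) of that block. -/
def frontEdge {n : ℕ} (p : Finpartition (Finset.Icc 1 n : Finset ℕ)) (i j : ℕ) : Prop :=
  i < j ∧ ∃ B ∈ p.parts, i ∈ B ∧ j ∈ B ∧ ∀ t ∈ B, i ≤ t

/-- `h` is a head of `p`, i.e. the minimum element of its block. -/
def isHead {n : ℕ} (p : Finpartition (Finset.Icc 1 n : Finset ℕ)) (h : ℕ) : Prop :=
  ∃ B ∈ p.parts, h ∈ B ∧ ∀ t ∈ B, h ≤ t

/-- `p` has no `k`-distant crossing: no standard edges `(i1,j1)`, `(i2,j2)` with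
`i1 < i2 < j1 < j2` and `j1 - i2 ≥ k`. -/
def kDistantNoncrossing {n : ℕ} (k : ℕ) (p : Finpartition (Finset.Icc 1 n : Finset ℕ)) : Prop :=
  ¬ ∃ i1 j1 i2 j2, stdEdge p i1 j1 ∧ stdEdge p i2 j2 ∧
    i1 < i2 ∧ i2 < j1 ∧ j1 < j2 ∧ k ≤ j1 - i2

/-- `p` has no `k`-front crossing: no front edges `(i1,j1)`, `(i2,j2)` with
`i1 < i2 < j1 < j2` and at least `k - 2` heads strictly between `i2` and `j1`.
This is equivalent to `p` being `12⋯k12`-avoiding. -/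
def kFrontNoncrossing {n : ℕ} (k : ℕ) (p : Finpartition (Finset.Icc 1 n : Finset ℕ)) : Prop :=
  ¬ ∃ i1 j1 i2 j2, frontEdge p i1 j1 ∧ frontEdge p i2 j2 ∧
    i1 < i2 ∧ i2 < j1 ∧ j1 < j2 ∧
    k - 2 ≤ Nat.card {h : ℕ // isHead p h ∧ i2 < h ∧ h < j1}

/-- number of cycles (including fixed points) of a permutation of `Fin n`. -/
def cycleCount {n : ℕ} (σ : Equiv.Perm (Fin n)) : ℕ :=
  σ.cycleType.card + (n - σ.cycleType.sum)

/-- the signed Stirling number of the first kind: `(-1)^(n-k)` times the number of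
permutations of `[n]` with `k` cycles. -/
noncomputable def stirlingFirst (n k : ℕ) : ℤ :=
  (-1) ^ (n - k) * (Nat.card {σ : Equiv.Perm (Fin n) // cycleCount σ = k} : ℤ)

/-- the Stirling number of the second kind: the number of set partitions of `[n]`
into `k` blocks. -/
noncomputable def stirlingSecond (n k : ℕ) : ℕ :=
  Nat.card {p : Finpartition (Finset.Icc 1 n : Finset ℕ) // p.parts.card = k}

/-- the Bell number: the number of set partitions of `[n]`. -/
noncomputable def bell (n : ℕ) : ℕ := Nat.card (Finpartition (Finset.Icc 1 n : Finset ℕ))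

/-- the number of `k`-distant noncrossing partitions of `[n]`. -/
noncomputable def dcount (k n : ℕ) : ℕ :=
  Nat.card {p : Finpartition (Finset.Icc 1 n : Finset ℕ) // kDistantNoncrossing k p}

/-- the number of `12⋯k12`-avoiding (= `k`-front noncrossing) partitions of `[n]`. -/
noncomputable def fcount (k n : ℕ) : ℕ :=
  Nat.card {p : Finpartition (Finset.Icc 1 n : Finset ℕ) // kFrontNoncrossing k p}

/-!
A partition is determined by its standard edges, and a set of arcs `(i, j)`, `i < j`, in `[1, n]`
is the set of standard edges of a partition exactly when no two arcs share a left endpoint or a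
right endpoint: the blocks are then the maximal chains of arcs. So `d₂(n)` counts such arc
diagrams on `[1, n]` without 2-distant crossings, and we classify them by the arc ending at `n`.
If there is none, or it is `(n - 1, n)`, deleting it leaves a diagram on `[1, n - 1]`. If it is
`(i - 1, n)` with `2 ≤ i ≤ n - 1`, no other arc can cross it, since an arc `(s, j)` with
`s < i - 1 < j < n` is 2-distant from it unless `j = i`. The diagram therefore splits at `i` into
a diagram on `[1, i]` avoiding the arc `(i - 1, i)`, counted by `d₂(i) - d₂(i - 1)`, and a
diagram on `[i, n - 1]`, counted by `d₂(n - i)`.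
-/

open Finset Relation
open scoped Classical

namespace Relation

variable {α : Type*} {r : α → α → Prop}

theorem equivalence_reflTransGen_or (hl : Relator.LeftUnique r) (hr : Relator.RightUnique r) :
    Equivalence fun a b => ReflTransGen r a b ∨ ReflTransGen r b a where
  refl _ := .inl .refl
  symm := Or.symm
  trans := by
    rintro a b c (hab | hba) (hbc | hcb)
    · exact .inl (hab.trans hbc)
    · exact (ReflTransGen.total_of_right_unique (r := Function.swap r) (fun _ _ _ h h' => hl h h')
        (reflTransGen_swap.2 hab) (reflTransGen_swap.2 hcb)).symm.imp
          reflTransGen_swap.1 reflTransGen_swap.1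
    · exact ReflTransGen.total_of_right_unique hr hba hbc
    · exact .inr (hcb.trans hba)

theorem eqvGen_iff_reflTransGen_or (hl : Relator.LeftUnique r) (hr : Relator.RightUnique r)
    {a b : α} : EqvGen r a b ↔ ReflTransGen r a b ∨ ReflTransGen r b a := by
  refine ⟨fun h => (equivalence_reflTransGen_or hl hr).eqvGen_iff.1
    (EqvGen.mono (fun _ _ hxy => .inl (.single hxy)) _ _ h), ?_⟩
  rintro (h | h)
  · exact EqvGen.reflTransGen_le_eqvGen r _ _ h
  · exact .symm _ _ (EqvGen.reflTransGen_le_eqvGen r _ _ h)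

end Relation

namespace Finpartition

variable {α : Type*} [DecidableEq α] {s : Finset α}

theorem parts_eq_image_part (P : Finpartition s) : P.parts = s.image P.part := by
  ext t
  refine ⟨fun ht => ?_, ?_⟩
  · obtain ⟨a, ha, rfl⟩ := P.part_surjOn ht
    exact mem_image_of_mem _ ha
  · rw [mem_image]
    rintro ⟨a, ha, rfl⟩
    exact P.part_mem.2 ha

theorem ext_of_mem_part {P Q : Finpartition s} (h : ∀ a b, b ∈ P.part a ↔ b ∈ Q.part a) :
    P = Q := by
  have : P.part = Q.part := funext fun a => Finset.ext (h a)
  ext1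
  rw [P.parts_eq_image_part, Q.parts_eq_image_part, this]

end Finpartition

def arcsIn (a b : ℕ) : Finset (ℕ × ℕ) := (Icc a b ×ˢ Icc a b).filter fun e => e.1 < e.2

theorem mem_arcsIn {a b : ℕ} {e : ℕ × ℕ} :
    e ∈ arcsIn a b ↔ a ≤ e.1 ∧ e.1 < e.2 ∧ e.2 ≤ b := by
  simp only [arcsIn, mem_filter, mem_product, mem_Icc]
  omega

section StandardEdges

variable {n : ℕ} (p : Finpartition (Icc 1 n : Finset ℕ))

theorem stdEdge_iff_mem_part {i j : ℕ} :
    stdEdge p i j ↔ i < j ∧ j ∈ p.part i ∧ ∀ t ∈ p.part i, ¬ (i < t ∧ t < j) := by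
  constructor
  · rintro ⟨hij, B, hB, hi, hj, hgap⟩
    rw [p.part_eq_of_mem hB hi]
    exact ⟨hij, hj, hgap⟩
  · rintro ⟨hij, hj, hgap⟩
    have hi : i ∈ Icc 1 n := p.part_nonempty.1 ⟨j, hj⟩
    exact ⟨hij, p.part i, p.part_mem.2 hi, p.mem_part hi, hj, hgap⟩

variable {p} in
theorem stdEdge.part_eq {i j : ℕ} (h : stdEdge p i j) : p.part i = p.part j := by
  obtain ⟨-, B, hB, hi, hj, -⟩ := h
  rw [p.part_eq_of_mem hB hi, p.part_eq_of_mem hB hj]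

variable {p} in
theorem stdEdge.mem_arcsIn {i j : ℕ} (h : stdEdge p i j) : (i, j) ∈ arcsIn 1 n := by
  obtain ⟨hij, B, hB, hi, hj, -⟩ := h
  have hi := p.le hB hi
  have hj := p.le hB hj
  simp only [mem_Icc] at hi hj
  exact _root_.mem_arcsIn.2 ⟨hi.1, hij, hj.2⟩

theorem stdEdge_rightUnique : Relator.RightUnique (stdEdge p) := by
  rintro i j j' ⟨hij, B, hB, hi, hj, hgap⟩ ⟨hij', B', hB', hi', hj', hgap'⟩
  obtain rfl := p.eq_of_mem_parts hB hB' hi hi'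
  by_contra hne
  rcases Nat.lt_or_gt_of_ne hne with h | h
  · exact hgap' j hj ⟨hij, h⟩
  · exact hgap j' hj' ⟨hij', h⟩

theorem stdEdge_leftUnique : Relator.LeftUnique (stdEdge p) := by
  rintro i i' j ⟨hij, B, hB, hi, hj, hgap⟩ ⟨hij', B', hB', hi', hj', hgap'⟩
  obtain rfl := p.eq_of_mem_parts hB hB' hj hj'
  by_contra hne
  rcases Nat.lt_or_gt_of_ne hne with h | h
  · exact hgap i' hi' ⟨h, hij'⟩
  · exact hgap' i hi ⟨h, hij⟩

theorem reflTransGen_stdEdge_of_mem_part {a b : ℕ} (hb : b ∈ p.part a) (hab : a ≤ b) :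
    ReflTransGen (stdEdge p) a b := by
  have ha : a ∈ Icc 1 n := p.part_nonempty.1 ⟨b, hb⟩
  induction b using Nat.strong_induction_on with
  | _ b ih =>
  rcases hab.eq_or_lt with rfl | hab
  · rfl
  -- the standard edge into `b` starts at the largest element of the block below `b`
  have hbelow : ((p.part a).filter (· < b)).Nonempty :=
    ⟨a, mem_filter.2 ⟨p.mem_part ha, hab⟩⟩
  set c := ((p.part a).filter (· < b)).max' hbelow
  obtain ⟨hc, hcb⟩ := mem_filter.1 (max'_mem _ hbelow)
  have hac : a ≤ c := le_max' _ a (mem_filter.2 ⟨p.mem_part ha, hab⟩)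
  have hcb_edge : stdEdge p c b := ⟨hcb, p.part a, p.part_mem.2 ha, hc, hb,
    fun t ht ⟨hct, htb⟩ => (le_max' _ t (mem_filter.2 ⟨ht, htb⟩)).not_gt hct⟩
  exact (ih c hcb hc hac).tail hcb_edge

theorem mem_part_iff_eqvGen_stdEdge {a b : ℕ} :
    b ∈ p.part a ↔ a ∈ Icc 1 n ∧ b ∈ Icc 1 n ∧ EqvGen (stdEdge p) a b := by
  constructor
  · intro hb
    have ha : a ∈ Icc 1 n := p.part_nonempty.1 ⟨b, hb⟩
    refine ⟨ha, p.part_subset a hb, ?_⟩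
    rcases le_total a b with hab | hba
    · exact EqvGen.reflTransGen_le_eqvGen _ _ _ (reflTransGen_stdEdge_of_mem_part p hb hab)
    · have ha' : a ∈ p.part b := by
        rw [p.part_eq_of_mem (p.part_mem.2 ha) hb]
        exact p.mem_part ha
      exact .symm _ _
        (EqvGen.reflTransGen_le_eqvGen _ _ _ (reflTransGen_stdEdge_of_mem_part p ha' hba))
  · rintro ⟨ha, hb, hab⟩
    have hpart : p.part a = p.part b := by
      clear ha hb
      induction hab with
      | rel _ _ h => exact h.part_eq
      | refl => rfl
      | symm _ _ _ ih => exact ih.symm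
      | trans _ _ _ _ _ ih ih' => exact ih.trans ih'
    exact (p.mem_part_iff_part_eq_part hb ha).2 hpart.symm

theorem ofSetSetoid_eqvGen_stdEdge :
    Finpartition.ofSetSetoid (EqvGen.setoid (stdEdge p)) (Icc 1 n) = p :=
  Finpartition.ext_of_mem_part fun _ _ => by
    rw [Finpartition.mem_part_ofSetSetoid_iff_rel, mem_part_iff_eqvGen_stdEdge]
    rfl

noncomputable def stdEdges (p : Finpartition (Icc 1 n : Finset ℕ)) : Finset (ℕ × ℕ) :=
  (arcsIn 1 n).filter fun e => stdEdge p e.1 e.2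

variable {p} in
theorem mem_stdEdges {e : ℕ × ℕ} :
    e ∈ stdEdges p ↔ stdEdge p e.1 e.2 :=
  ⟨fun h => (mem_filter.1 h).2, fun h => mem_filter.2 ⟨h.mem_arcsIn, h⟩⟩

end StandardEdges

noncomputable def ofArcs (n : ℕ) (E : Finset (ℕ × ℕ)) :
    Finpartition (Icc 1 n : Finset ℕ) :=
  Finpartition.ofSetSetoid (EqvGen.setoid fun i j => (i, j) ∈ E) (Icc 1 n)

section ArcDiagrams

variable {n : ℕ}

theorem ofArcs_stdEdges (p : Finpartition (Icc 1 n : Finset ℕ)) : ofArcs n (stdEdges p) = p := by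
  have : (fun i j => (i, j) ∈ stdEdges p) = stdEdge p := by
    funext i j
    exact propext mem_stdEdges
  rw [ofArcs, this, ofSetSetoid_eqvGen_stdEdge]

variable {a b : ℕ} {E : Finset (ℕ × ℕ)}

theorem le_of_reflTransGen_of_subset_arcsIn (hE : E ⊆ arcsIn a b) {i j : ℕ}
    (h : ReflTransGen (fun i j => (i, j) ∈ E) i j) : i ≤ j := by
  induction h with
  | refl => rfl
  | tail _ hjk ih => exact ih.trans (mem_arcsIn.1 (hE hjk)).2.1.le

theorem stdEdge_ofArcs_iff (hE : E ⊆ arcsIn 1 n)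
    (hends : ∀ e ∈ E, ∀ f ∈ E, (e.1 = f.1 ↔ e.2 = f.2)) {i j : ℕ} :
    stdEdge (ofArcs n E) i j ↔ (i, j) ∈ E := by
  have hright : Relator.RightUnique fun i j => (i, j) ∈ E :=
    fun _ _ _ h h' => (hends _ h _ h').1 rfl
  have hleft : Relator.LeftUnique fun i j => (i, j) ∈ E :=
    fun _ _ _ h h' => (hends _ h _ h').2 rfl
  have hlink : ∀ {x y}, y ∈ (ofArcs n E).part x ↔ x ∈ Icc 1 n ∧ y ∈ Icc 1 n ∧
      (ReflTransGen (fun i j => (i, j) ∈ E) x y ∨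
        ReflTransGen (fun i j => (i, j) ∈ E) y x) := by
    intro x y
    rw [ofArcs, Finpartition.mem_part_ofSetSetoid_iff_rel,
      ← eqvGen_iff_reflTransGen_or hleft hright]
    rfl
  have hIcc : ∀ {x y}, (x, y) ∈ E → x ∈ Icc 1 n ∧ y ∈ Icc 1 n := fun h => by
    have := mem_arcsIn.1 (hE h)
    simp only [mem_Icc]
    omega
  rw [stdEdge_iff_mem_part, hlink]
  constructor
  · rintro ⟨hij, ⟨hi, hj, hpath | hpath⟩, hgap⟩
    · -- the first arc `(i, c)` of the path from `i` to `j` must end at `j`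
      obtain rfl | ⟨c, hic, hcj⟩ := hpath.cases_head
      · exact absurd hij (lt_irrefl i)
      have hc_le := le_of_reflTransGen_of_subset_arcsIn hE hcj
      have hic_lt := (mem_arcsIn.1 (hE hic)).2.1
      have hc_eq : c = j := by
        by_contra hne
        exact hgap c (hlink.2 ⟨hi, (hIcc hic).2, .inl (.single hic)⟩) ⟨hic_lt, by omega⟩
      exact hc_eq ▸ hic
    · exact absurd (le_of_reflTransGen_of_subset_arcsIn hE hpath) (not_le.2 hij)
  · intro hij
    refine ⟨(mem_arcsIn.1 (hE hij)).2.1,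
      ⟨(hIcc hij).1, (hIcc hij).2, .inl (.single hij)⟩, ?_⟩
    rintro t ht ⟨hit, htj⟩
    obtain ⟨-, -, hpath | hpath⟩ := hlink.1 ht
    · obtain rfl | ⟨c, hic, hct⟩ := hpath.cases_head
      · exact lt_irrefl i hit
      obtain rfl := hright hij hic
      exact absurd (le_of_reflTransGen_of_subset_arcsIn hE hct) (not_le.2 htj)
    · exact absurd (le_of_reflTransGen_of_subset_arcsIn hE hpath) (not_le.2 hit)

theorem stdEdges_ofArcs (hE : E ⊆ arcsIn 1 n)
    (hends : ∀ e ∈ E, ∀ f ∈ E, (e.1 = f.1 ↔ e.2 = f.2)) :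
    stdEdges (ofArcs n E) = E := by
  ext e
  rw [mem_stdEdges, stdEdge_ofArcs_iff hE hends]

end ArcDiagrams

def ArcsCross (k : ℕ) (e f : ℕ × ℕ) : Prop :=
  e.1 < f.1 ∧ f.1 < e.2 ∧ e.2 < f.2 ∧ k ≤ e.2 - f.1

def ArcsCompatible (k : ℕ) (e f : ℕ × ℕ) : Prop :=
  (e.1 = f.1 ↔ e.2 = f.2) ∧ ¬ ArcsCross k e f

noncomputable def ncDiagrams (k a b : ℕ) : Finset (Finset (ℕ × ℕ)) :=
  (arcsIn a b).powerset.filter fun E => ∀ e ∈ E, ∀ f ∈ E, ArcsCompatible k e f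

theorem mem_ncDiagrams {k a b : ℕ} {E : Finset (ℕ × ℕ)} :
    E ∈ ncDiagrams k a b ↔
      E ⊆ arcsIn a b ∧ ∀ e ∈ E, ∀ f ∈ E, ArcsCompatible k e f := by
  rw [ncDiagrams, mem_filter, mem_powerset]

section Transfer

variable {k n : ℕ}

theorem kDistantNoncrossing_iff_stdEdges (p : Finpartition (Icc 1 n : Finset ℕ)) :
    kDistantNoncrossing k p ↔ ∀ e ∈ stdEdges p, ∀ f ∈ stdEdges p, ¬ ArcsCross k e f := by
  constructor
  · rintro h e he f hf hc
    exact h ⟨e.1, e.2, f.1, f.2, mem_stdEdges.1 he, mem_stdEdges.1 hf, hc⟩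
  · rintro h ⟨i1, j1, i2, j2, he, hf, hc⟩
    exact h (i1, j1) (mem_stdEdges.2 he) (i2, j2) (mem_stdEdges.2 hf) hc

theorem stdEdges_mem_ncDiagrams_iff (p : Finpartition (Icc 1 n : Finset ℕ)) :
    stdEdges p ∈ ncDiagrams k 1 n ↔ kDistantNoncrossing k p := by
  rw [mem_ncDiagrams, kDistantNoncrossing_iff_stdEdges]
  refine ⟨fun h e he f hf => (h.2 e he f hf).2, fun h => ⟨filter_subset _ _, fun e he f hf =>
    ⟨?_, h e he f hf⟩⟩⟩
  rw [mem_stdEdges] at he hf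
  constructor
  · intro h1
    exact stdEdge_rightUnique p he (h1 ▸ hf)
  · intro h2
    exact stdEdge_leftUnique p he (h2 ▸ hf)

theorem dcount_eq_card_ncDiagrams (k n : ℕ) : dcount k n = #(ncDiagrams k 1 n) := by
  rw [dcount, Nat.card_eq_fintype_card, Fintype.card_subtype]
  have hends {E} (hE : E ∈ ncDiagrams k 1 n) :=
    fun e he f hf => ((mem_ncDiagrams.1 hE).2 e he f hf).1
  refine card_nbij' stdEdges (ofArcs n) (fun p hp => ?_) (fun E hE => ?_)
    (fun p _ => ofArcs_stdEdges p)
    (fun E hE => stdEdges_ofArcs (mem_ncDiagrams.1 hE).1 (hends hE))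
  · exact (stdEdges_mem_ncDiagrams_iff p).2 (mem_filter.1 hp).2
  · refine mem_filter.2 ⟨mem_univ _, (stdEdges_mem_ncDiagrams_iff _).1 ?_⟩
    rwa [stdEdges_ofArcs (mem_ncDiagrams.1 hE).1 (hends hE)]

end Transfer

section Counting

variable {k a b i : ℕ}

theorem ncDiagrams_of_le (h : b ≤ a) : ncDiagrams k a b = {∅} := by
  ext E
  rw [mem_ncDiagrams, mem_singleton]
  constructor
  · rintro ⟨hE, -⟩
    refine eq_empty_of_forall_notMem fun e he => ?_
    have := mem_arcsIn.1 (hE he)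
    omega
  · rintro rfl
    simp

theorem card_ncDiagrams_add (s : ℕ) : #(ncDiagrams k (a + s) (b + s)) = #(ncDiagrams k a b) := by
  refine card_nbij' (fun E => E.image fun e => (e.1 - s, e.2 - s))
    (fun E => E.image fun e => (e.1 + s, e.2 + s)) (fun E hE => ?_) (fun E hE => ?_)
    (fun E hE => ?_) (fun E hE => ?_)
  all_goals
    obtain ⟨hsub, hcomp⟩ := mem_ncDiagrams.1 hE
    have hrange : ∀ e ∈ E, _ := fun e he => mem_arcsIn.1 (hsub he)
  · refine mem_ncDiagrams.2 ⟨?_, ?_⟩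
    · simp only [subset_iff, forall_mem_image, mem_arcsIn]
      intro e he
      have := hrange e he
      omega
    · simp only [forall_mem_image]
      intro e he f hf
      have := hrange e he
      have := hrange f hf
      have := hcomp e he f hf
      simp only [ArcsCompatible, ArcsCross] at this ⊢
      omega
  · refine mem_ncDiagrams.2 ⟨?_, ?_⟩
    · simp only [subset_iff, forall_mem_image, mem_arcsIn]
      intro e he
      have := hrange e he
      omega
    · simp only [forall_mem_image]
      intro e he f hf
      have := hcomp e he f hf
      simp only [ArcsCompatible, ArcsCross] at this ⊢
      omega
  · simp only [image_image, Function.comp_def]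
    refine (image_congr fun e he => ?_).trans image_id'
    have := hrange e (mem_coe.1 he)
    ext <;> simp only <;> omega
  · simp [image_image, Function.comp_def]

theorem filter_ncDiagrams_succ_notMem :
    (ncDiagrams k a (b + 1)).filter (fun E => ∀ t, (t, b + 1) ∉ E) = ncDiagrams k a b := by
  ext E
  simp only [mem_filter, mem_ncDiagrams]
  constructor
  · rintro ⟨⟨hsub, hcomp⟩, hlast⟩
    refine ⟨fun e he => ?_, hcomp⟩
    have := mem_arcsIn.1 (hsub he)
    have : e.2 ≠ b + 1 := fun h => hlast e.1 (h ▸ he)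
    exact mem_arcsIn.2 (by omega)
  · rintro ⟨hsub, hcomp⟩
    refine ⟨⟨fun e he => ?_, hcomp⟩, fun t ht => ?_⟩
    · have := mem_arcsIn.1 (hsub he)
      exact mem_arcsIn.2 (by omega)
    · have := mem_arcsIn.1 (hsub ht)
      omega

theorem card_ncDiagrams_succ :
    #(ncDiagrams k a (b + 1)) = #(ncDiagrams k a b) +
      ∑ i ∈ Icc (a + 1) (b + 1),
        #((ncDiagrams k a (b + 1)).filter ((i - 1, b + 1) ∈ ·)) := by
  rw [← card_filter_add_card_filter_not (fun E => ∃ t, (t, b + 1) ∈ E)]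
  simp only [not_exists]
  rw [filter_ncDiagrams_succ_notMem, ← card_biUnion, add_comm]
  · congr 2
    ext E
    simp only [mem_filter, mem_biUnion, mem_Icc]
    constructor
    · rintro ⟨hE, t, ht⟩
      have := mem_arcsIn.1 ((mem_ncDiagrams.1 hE).1 ht)
      exact ⟨t + 1, by omega, hE, by simpa using ht⟩
    · rintro ⟨i, -, hE, hi⟩
      exact ⟨hE, _, hi⟩
  · -- an arc diagram has at most one arc ending at `b + 1`
    intro i hi j hj hij
    simp only [coe_Icc, Set.mem_Icc] at hi hj
    refine disjoint_filter.2 fun E hE hiE hjE => hij ?_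
    have := ((mem_ncDiagrams.1 hE).2 _ hiE _ hjE).1.2 rfl
    simp only at this
    omega

theorem mem_ncDiagrams_of_subset {a' b' : ℕ} {E F : Finset (ℕ × ℕ)}
    (hE : E ∈ ncDiagrams k a b) (hFE : F ⊆ E) (hF : F ⊆ arcsIn a' b') :
    F ∈ ncDiagrams k a' b' :=
  mem_ncDiagrams.2 ⟨hF, fun e he f hf => (mem_ncDiagrams.1 hE).2 e (hFE he) f (hFE hf)⟩

theorem card_filter_ncDiagrams_mem_last (hab : a ≤ b) :
    #((ncDiagrams k a (b + 1)).filter ((b, b + 1) ∈ ·)) = #(ncDiagrams k a b) := by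
  refine card_nbij' (fun E => E.erase (b, b + 1)) (insert (b, b + 1)) (fun E hE => ?_)
    (fun E hE => ?_) (fun E hE => insert_erase (mem_filter.1 hE).2)
    (fun E hE => erase_insert fun h => ?_)
  · obtain ⟨hE, hlast⟩ := mem_filter.1 hE
    obtain ⟨hsub, hcomp⟩ := mem_ncDiagrams.1 hE
    refine mem_ncDiagrams_of_subset hE (erase_subset _ _) fun e he => ?_
    obtain ⟨hne, he⟩ := mem_erase.1 he
    have := mem_arcsIn.1 (hsub he)
    have := (hcomp e he _ hlast).1
    rw [Ne, Prod.ext_iff] at hne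
    exact mem_arcsIn.2 (by omega)
  · obtain ⟨hsub, hcomp⟩ := mem_ncDiagrams.1 hE
    have hrange : ∀ e ∈ insert (b, b + 1) E, e = (b, b + 1) ∨ e ∈ E ∧ e.2 ≤ b := by
      intro e he
      rcases mem_insert.1 he with rfl | he
      · exact .inl rfl
      · exact .inr ⟨he, (mem_arcsIn.1 (hsub he)).2.2⟩
    refine mem_filter.2 ⟨mem_ncDiagrams.2 ⟨fun e he => ?_, fun e he f hf => ?_⟩,
      mem_insert_self _ _⟩
    · rcases hrange e he with rfl | ⟨he, -⟩
      · exact mem_arcsIn.2 (by omega)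
      · have := mem_arcsIn.1 (hsub he)
        exact mem_arcsIn.2 (by omega)
    rcases hrange e he with rfl | ⟨he, heb⟩ <;> rcases hrange f hf with rfl | ⟨hf, hfb⟩
    · simp [ArcsCompatible, ArcsCross]
    all_goals first
      | exact hcomp e he f hf
      | (have := mem_arcsIn.1 (hsub ‹_›); simp only [ArcsCompatible, ArcsCross]; omega)
  · have := mem_arcsIn.1 ((mem_ncDiagrams.1 hE).1 h)
    omega

theorem card_filter_ncDiagrams_notMem_last (hab : a ≤ b) :
    #((ncDiagrams k a (b + 1)).filter ((b, b + 1) ∉ ·)) + #(ncDiagrams k a b) =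
      #(ncDiagrams k a (b + 1)) := by
  rw [← card_filter_ncDiagrams_mem_last hab, add_comm]
  exact card_filter_add_card_filter_not _

theorem arc_cases_of_mem_ncDiagrams_two {E : Finset (ℕ × ℕ)} {e : ℕ × ℕ}
    (hE : E ∈ ncDiagrams 2 a (b + 1)) (hc : (i - 1, b + 1) ∈ E) (he : e ∈ E) :
    e = (i - 1, b + 1) ∨ (a ≤ e.1 ∧ e.1 + 1 < i ∧ e.1 < e.2 ∧ e.2 ≤ i) ∨
      (i ≤ e.1 ∧ e.1 < e.2 ∧ e.2 ≤ b) := by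
  obtain ⟨hsub, hcomp⟩ := mem_ncDiagrams.1 hE
  have := mem_arcsIn.1 (hsub he)
  have := hcomp e he _ hc
  simp only [ArcsCompatible, ArcsCross, Prod.ext_iff] at this ⊢
  omega

theorem range_of_mem_ncDiagrams_two_left {L : Finset (ℕ × ℕ)} {e : ℕ × ℕ}
    (hL : L ∈ (ncDiagrams 2 a i).filter ((i - 1, i) ∉ ·)) (he : e ∈ L) :
    a ≤ e.1 ∧ e.1 + 1 < i ∧ e.1 < e.2 ∧ e.2 ≤ i := by
  obtain ⟨hL, hLi⟩ := mem_filter.1 hL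
  have := mem_arcsIn.1 ((mem_ncDiagrams.1 hL).1 he)
  have : e ≠ (i - 1, i) := fun h => hLi (h ▸ he)
  rw [Ne, Prod.ext_iff] at this
  omega

theorem filter_mem_product_of_mem_ncDiagrams_two (hai : a < i) (hib : i ≤ b)
    {E : Finset (ℕ × ℕ)} (hE : E ∈ ncDiagrams 2 a (b + 1)) (hc : (i - 1, b + 1) ∈ E) :
    (E.filter (·.2 ≤ i), E.filter (i ≤ ·.1)) ∈
      (ncDiagrams 2 a i).filter ((i - 1, i) ∉ ·) ×ˢ ncDiagrams 2 i b := by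
  have hcases {e} (he : e ∈ E) := arc_cases_of_mem_ncDiagrams_two hE hc he
  refine mem_product.2 ⟨mem_filter.2 ⟨mem_ncDiagrams_of_subset hE (filter_subset _ _) ?_, ?_⟩,
    mem_ncDiagrams_of_subset hE (filter_subset _ _) ?_⟩
  · intro e he
    obtain ⟨he, hei⟩ := mem_filter.1 he
    have := hcases he
    rw [Prod.ext_iff] at this
    exact mem_arcsIn.2 (by omega)
  · intro h
    have := hcases (mem_filter.1 h).1
    rw [Prod.ext_iff] at this
    omega
  · intro e he
    obtain ⟨he, hei⟩ := mem_filter.1 he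
    have := hcases he
    rw [Prod.ext_iff] at this
    exact mem_arcsIn.2 (by omega)

theorem insert_union_mem_ncDiagrams_two (hai : a < i) (hib : i ≤ b)
    {L R : Finset (ℕ × ℕ)} (hL : L ∈ (ncDiagrams 2 a i).filter ((i - 1, i) ∉ ·))
    (hR : R ∈ ncDiagrams 2 i b) :
    insert (i - 1, b + 1) (L ∪ R) ∈ ncDiagrams 2 a (b + 1) := by
  have hcL := (mem_ncDiagrams.1 (mem_filter.1 hL).1).2
  obtain ⟨hsubR, hcR⟩ := mem_ncDiagrams.1 hR
  have hcases : ∀ e ∈ insert (i - 1, b + 1) (L ∪ R), e = (i - 1, b + 1) ∨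
      e ∈ L ∧ (a ≤ e.1 ∧ e.1 + 1 < i ∧ e.1 < e.2 ∧ e.2 ≤ i) ∨
      e ∈ R ∧ (i ≤ e.1 ∧ e.1 < e.2 ∧ e.2 ≤ b) := by
    intro e he
    rcases mem_insert.1 he with rfl | he
    · exact .inl rfl
    rcases mem_union.1 he with he | he
    · exact .inr (.inl ⟨he, range_of_mem_ncDiagrams_two_left hL he⟩)
    · exact .inr (.inr ⟨he, mem_arcsIn.1 (hsubR he)⟩)
  refine mem_ncDiagrams.2 ⟨fun e he => ?_, fun e he f hf => ?_⟩
  · have := hcases e he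
    rw [Prod.ext_iff] at this
    exact mem_arcsIn.2 (by omega)
  rcases hcases e he with rfl | ⟨he, he'⟩ | ⟨he, he'⟩ <;>
    rcases hcases f hf with rfl | ⟨hf, hf'⟩ | ⟨hf, hf'⟩
  · simp [ArcsCompatible, ArcsCross]
  all_goals first
    | exact hcL e he f hf
    | exact hcR e he f hf
    | (simp only [ArcsCompatible, ArcsCross]; omega)

theorem card_filter_ncDiagrams_two_mem (hai : a < i) (hib : i ≤ b) :
    #((ncDiagrams 2 a (b + 1)).filter ((i - 1, b + 1) ∈ ·)) =
      #((ncDiagrams 2 a i).filter ((i - 1, i) ∉ ·)) * #(ncDiagrams 2 i b) := by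
  rw [← card_product]
  refine card_nbij' (fun E => (E.filter (·.2 ≤ i), E.filter (i ≤ ·.1)))
    (fun LR => insert (i - 1, b + 1) (LR.1 ∪ LR.2))
    (fun E hE => filter_mem_product_of_mem_ncDiagrams_two hai hib
      (mem_filter.1 hE).1 (mem_filter.1 hE).2)
    (fun LR hLR => mem_filter.2 ⟨insert_union_mem_ncDiagrams_two hai hib
      (mem_product.1 hLR).1 (mem_product.1 hLR).2, mem_insert_self _ _⟩)
    (fun E hE => ?_) (fun LR hLR => ?_)
  · obtain ⟨hE, hc⟩ := mem_filter.1 hE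
    ext e
    simp only [mem_insert, mem_union, mem_filter]
    constructor
    · rintro (rfl | ⟨he, -⟩ | ⟨he, -⟩)
      exacts [hc, he, he]
    · intro he
      rcases arc_cases_of_mem_ncDiagrams_two hE hc he with rfl | ⟨-, -, -, h⟩ | ⟨h, -⟩
      exacts [.inl rfl, .inr (.inl ⟨he, h⟩), .inr (.inr ⟨he, h⟩)]
  · obtain ⟨hL, hR⟩ := mem_product.1 hLR
    have hLr {e} (he : e ∈ LR.1) := range_of_mem_ncDiagrams_two_left hL he
    have hRr {e} (he : e ∈ LR.2) := mem_arcsIn.1 ((mem_ncDiagrams.1 hR).1 he)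
    refine Prod.ext (ext fun e => ?_) (ext fun e => ?_) <;>
      simp only [mem_insert, mem_union, mem_filter] <;> constructor
    · rintro ⟨rfl | he | he, hei⟩
      exacts [by omega, he, by have := hRr he; omega]
    · intro he
      exact ⟨.inr (.inl he), (hLr he).2.2.2⟩
    · rintro ⟨rfl | he | he, hei⟩
      exacts [by omega, by have := hLr he; omega, he]
    · intro he
      exact ⟨.inr (.inr he), (hRr he).1⟩

end Counting

theorem card_ncDiagrams_two_succ {b : ℕ} (hb : 1 ≤ b) :
    (#(ncDiagrams 2 1 (b + 1)) : ℤ) = 2 * #(ncDiagrams 2 1 b) +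
      ∑ i ∈ Icc 2 b, (#(ncDiagrams 2 1 (b + 1 - i)) : ℤ) *
        (#(ncDiagrams 2 1 i) - #(ncDiagrams 2 1 (i - 1))) := by
  have hsplit {i} (hi : i ∈ Icc 2 b) :
      (#((ncDiagrams 2 1 (b + 1)).filter ((i - 1, b + 1) ∈ ·)) : ℤ) =
        #(ncDiagrams 2 1 (b + 1 - i)) * (#(ncDiagrams 2 1 i) - #(ncDiagrams 2 1 (i - 1))) := by
    obtain ⟨j, rfl⟩ : ∃ j, i = j + 1 := ⟨i - 1, by simp only [mem_Icc] at hi; omega⟩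
    simp only [mem_Icc] at hi
    have hshift := card_ncDiagrams_add (k := 2) (a := 1) (b := b - j) j
    rw [show 1 + j = j + 1 by omega, show b - j + j = b by omega] at hshift
    have hcompl := card_filter_ncDiagrams_notMem_last (k := 2) (show 1 ≤ j by omega)
    rw [card_filter_ncDiagrams_two_mem (by omega) (by omega), Nat.add_sub_cancel, hshift,
      show b + 1 - (j + 1) = b - j by omega, ← hcompl]
    push_cast
    ring
  rw [card_ncDiagrams_succ, sum_Icc_succ_top (by omega), Nat.add_sub_cancel,
    card_filter_ncDiagrams_mem_last hb]
  push_cast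
  rw [sum_congr rfl fun i hi => hsplit hi]
  ring

theorem dcount_two_rec :
    dcount 2 0 = 1 ∧ dcount 2 1 = 1 ∧ ∀ n, 2 ≤ n →
      (dcount 2 n : ℤ) = 2 * dcount 2 (n - 1) +
        ∑ i ∈ Finset.Icc 2 (n - 1),
          (dcount 2 (n - i) : ℤ) * ((dcount 2 i : ℤ) - (dcount 2 (i - 1) : ℤ)) := by
  simp only [dcount_eq_card_ncDiagrams]
  refine ⟨by rw [ncDiagrams_of_le zero_le_one, card_singleton],
    by rw [ncDiagrams_of_le le_rfl, card_singleton], fun n hn => ?_⟩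
  obtain ⟨b, rfl⟩ : ∃ b, n = b + 1 := ⟨n - 1, by omega⟩
  rw [Nat.add_sub_cancel]
  exact card_ncDiagrams_two_succ (by omega)
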